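/- For real numbers ω_1, …, ω_n with all partial sums Σ_{j=1}^k ω_j (1 ≤ k ≤ n) nonzero, the identity Σ_{p=1}^{n} (−1)^p / [ (∏_{m=1}^p Σ_{i=m}^p ω_i)(∏_{k=p+1}^{n} Σ_{j=p+1}^k ω_j) ] = −1/∏_{k=1}^n (Σ_{j=1}^k ω_j) holds (assuming the inner sums Σ_{i=m}^p ω_i in the denominators are also nonzero). -/

import Mathlib

/-!
With the partial sums `y j = ω 0 + ⋯ + ω (j - 1)`, every inner sum is a difference `y b - y a`,
and up to the sign `(-1) ^ (n - p)` the `p`-th denominator is `∏ m ≠ p, (y p - y m)` over the nodes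
`y 0 = 0, y 1, …, y n`, which are distinct by hypothesis. The reciprocals of these products are the
barycentric weights of the nodes, and they sum to zero (the leading coefficient of the Lagrange
interpolant of the constant `1` on at least two nodes). The right-hand side is minus the term `p = 0`.
-/

open Finset Polynomial

namespace Lagrange

theorem sum_nodalWeight_eq_zero {F ι : Type*} [Field F] [DecidableEq ι] {s : Finset ι}
    {v : ι → F} (hvs : Set.InjOn v s) (hs : 2 ≤ #s) :
    ∑ i ∈ s, nodalWeight s v i = 0 := by
  -- compare the coefficients of `X ^ (#s - 1)` in `∑ i ∈ s, basis s v i = 1`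
  have hcoeff := congrArg (coeff · (#s - 1)) (sum_basis hvs (card_pos.mp (by omega)))
  simp only [finsetSum_coeff, coeff_one, if_neg (show #s - 1 ≠ 0 by omega)] at hcoeff
  rw [← hcoeff]
  refine sum_congr rfl fun i hi => ?_
  have hdeg : (nodal (s.erase i) v).natDegree = #s - 1 := by
    rw [natDegree_nodal, card_erase_of_mem hi]
  rw [basis_eq_prod_sub_inv_mul_nodal_div hi, ← nodal_erase_eq_nodal_div hi, coeff_C_mul, ← hdeg,
    nodal_monic.coeff_natDegree, mul_one, nodalWeight]

end Lagrange

section NodalProducts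

variable {F : Type*} [Field F]

theorem prod_erase_range_sub_eq (v : ℕ → F) {n p : ℕ} (hp : p ≤ n) :
    ∏ m ∈ (range (n + 1)).erase p, (v p - v m)
      = (-1) ^ (n - p) * ((∏ m ∈ range p, (v p - v m)) * ∏ k ∈ Ioc p n, (v k - v p)) := by
  have hsplit : (range (n + 1)).erase p = range p ∪ Ioc p n := by
    ext m
    simp only [mem_erase, mem_union, mem_range, mem_Ioc]
    omega
  have hdisj : Disjoint (range p) (Ioc p n) :=
    disjoint_left.mpr fun m hm hm' => by simp only [mem_range, mem_Ioc] at hm hm'; omega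
  have hflip : ∏ k ∈ Ioc p n, (v p - v k) = (-1) ^ (n - p) * ∏ k ∈ Ioc p n, (v k - v p) := by
    simp only [← neg_sub (v _) (v p), prod_neg, Nat.card_Ioc]
  rw [hsplit, prod_union hdisj, hflip]
  ring

theorem sum_neg_one_pow_div_prod_sub_eq_zero {v : ℕ → F} {n : ℕ} (hn : 1 ≤ n)
    (hv : Set.InjOn v (range (n + 1))) :
    ∑ p ∈ range (n + 1),
      (-1) ^ p / ((∏ m ∈ range p, (v p - v m)) * ∏ k ∈ Ioc p n, (v k - v p)) = 0 := by
  have hterm : ∀ p ∈ range (n + 1),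
      (-1) ^ p / ((∏ m ∈ range p, (v p - v m)) * ∏ k ∈ Ioc p n, (v k - v p))
        = (-1) ^ n * Lagrange.nodalWeight (range (n + 1)) v p := by
    intro p hp
    have hpn : p ≤ n := Nat.lt_succ_iff.mp (mem_range.mp hp)
    have hsign : (-1 : F) ^ n * (-1) ^ (n - p) = (-1) ^ p := by
      rw [← pow_add, show n + (n - p) = p + 2 * (n - p) by omega, pow_add, pow_mul]
      simp
    rw [Lagrange.nodalWeight, prod_inv_distrib, prod_erase_range_sub_eq v hpn, mul_inv,
      ← inv_pow, inv_neg, inv_one, ← mul_assoc, hsign, div_eq_mul_inv]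
  rw [sum_congr rfl hterm, ← mul_sum, Lagrange.sum_nodalWeight_eq_zero hv (by simp; omega),
    mul_zero]

end NodalProducts

theorem sum_Icc_eq_sub_sum_range {M : Type*} [AddCommGroup M] (f : ℕ → M) {a b : ℕ}
    (hab : a ≤ b + 1) : ∑ i ∈ Icc a b, f i = ∑ i ∈ range (b + 1), f i - ∑ i ∈ range a, f i := by
  rw [← Ico_add_one_right_eq_Icc, sum_Ico_eq_sub _ hab]

theorem prod_sum_Icc_mul_prod_sum_Icc {R : Type*} [CommRing R] (f : ℕ → R) {n p : ℕ}
    (hp : 1 ≤ p) (hpn : p ≤ n) :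
    (∏ m ∈ range p, ∑ i ∈ Icc m (p - 1), f i) * ∏ k ∈ Icc p (n - 1), ∑ j ∈ Icc p k, f j
      = (∏ m ∈ range p, (∑ i ∈ range p, f i - ∑ i ∈ range m, f i)) *
          ∏ k ∈ Ioc p n, (∑ i ∈ range k, f i - ∑ i ∈ range p, f i) := by
  have hleft : ∏ m ∈ range p, ∑ i ∈ Icc m (p - 1), f i
      = ∏ m ∈ range p, (∑ i ∈ range p, f i - ∑ i ∈ range m, f i) :=
    prod_congr rfl fun m hm => by
      rw [sum_Icc_eq_sub_sum_range f (by rw [mem_range] at hm; omega), Nat.sub_add_cancel hp]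
  have hright : ∏ k ∈ Icc p (n - 1), ∑ j ∈ Icc p k, f j
      = ∏ k ∈ Ioc p n, (∑ i ∈ range k, f i - ∑ i ∈ range p, f i) := by
    rw [Icc_sub_one_right_eq_Ico_of_not_isMin (by simp; omega), ← Ico_add_one_add_one_eq_Ioc,
      ← prod_Ico_add' (fun k => ∑ i ∈ range k, f i - ∑ i ∈ range p, f i)]
    exact prod_congr rfl fun k hk => sum_Icc_eq_sub_sum_range f (by simp at hk; omega)
  rw [hleft, hright]

theorem injOn_sum_range_of_sum_Icc_ne_zero {M : Type*} [AddCommGroup M] {f : ℕ → M} {n : ℕ}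
    (hf : ∀ a b : ℕ, a ≤ b → b < n → ∑ i ∈ Icc a b, f i ≠ 0) :
    Set.InjOn (fun j => ∑ i ∈ range j, f i) (range (n + 1)) := by
  have hlt : ∀ a b, a < b → b ≤ n → ∑ i ∈ range a, f i ≠ ∑ i ∈ range b, f i := by
    intro a b hab hbn heq
    apply hf a (b - 1) (by omega) (by omega)
    rw [Icc_sub_one_right_eq_Ico_of_not_isMin (by simp; omega), sum_Ico_eq_sub _ hab.le, heq,
      sub_self]
  intro a ha b hb heq
  simp only [coe_range, Set.mem_Iio] at ha hb
  by_contra hne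
  rcases Nat.lt_or_gt_of_ne hne with h | h
  · exact hlt a b h (by omega) heq
  · exact hlt b a h (by omega) heq.symm

theorem alternating_partial_fraction_identity
    (n : ℕ) (hn : 1 ≤ n) (ω : ℕ → ℝ)
    (hsums : ∀ a b : ℕ, a ≤ b → b < n → ∑ i ∈ Finset.Icc a b, ω i ≠ 0) :
    ∑ p ∈ Finset.Icc 1 n,
        (-1 : ℝ) ^ p /
          ((∏ m ∈ Finset.range p, ∑ i ∈ Finset.Icc m (p - 1), ω i) *
            (∏ k ∈ Finset.Icc p (n - 1), ∑ j ∈ Finset.Icc p k, ω j))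
      = -1 / ∏ k ∈ Finset.range n, ∑ j ∈ Finset.range (k + 1), ω j := by
  have hzero := sum_neg_one_pow_div_prod_sub_eq_zero hn (injOn_sum_range_of_sum_Icc_ne_zero hsums)
  rw [show range (n + 1) = insert 0 (Icc 1 n) by ext; simp; omega, sum_insert (by simp)] at hzero
  simp only [pow_zero, range_zero, prod_empty, one_mul, sum_empty, sub_zero] at hzero
  have hrhs : ∏ k ∈ range n, ∑ j ∈ range (k + 1), ω j = ∏ k ∈ Ioc 0 n, ∑ j ∈ range k, ω j := by
    rw [← Ico_add_one_add_one_eq_Ioc, range_eq_Ico, prod_Ico_add' (fun k => ∑ j ∈ range k, ω j)]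
  rw [sum_congr rfl fun p hp => by
      rw [prod_sum_Icc_mul_prod_sum_Icc ω (mem_Icc.mp hp).1 (mem_Icc.mp hp).2],
    hrhs, neg_div]
  linear_combination hzero
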